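/- arXiv:1303.5908 — 4 statements merged into one kernel-verified Lean document; each statement's English description precedes it below -/
import Mathlib

section
/- Let B = [[b₁₁, −b₁₂], [−b₂₁, b₂₂]] with b₁₁, b₂₂ > 0 and b₁₂, b₂₁ ≥ 0, let σ₁, σ₂ > 0 and λ ∈ [0,∞)². Suppose v = (v₁, v₂) : [0,∞) → [0,∞)² is differentiable with v(0) = λ and satisfies v₁′(t) = −b₁₁v₁(t) + b₁₂v₂(t) − (σ₁²/2)v₁(t)² and v₂′(t) = b₂₁v₁(t) − b₂₂v₂(t) − (σ₂²/2)v₂(t)² for all t ≥ 0. Then for all t ≥ 0 and i ∈ {1,2}, v_i(t) ≤ (exp(−tB)·λ)_i, i.e. v is dominated componentwise by the solution u(t) = exp(−tB)·λ of the linear system u₁′ = −b₁₁u₁ + b₁₂u₂, u₂′ = b₂₁u₁ − b₂₂u₂ with u(0) = λ. -/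
/-!
With `A = -B`, the Riccati system reads `v' = A v - q` with `q ≥ 0`, so `v` is a subsolution of
the linear system `u' = A u`. The off-diagonal entries of `A` are nonnegative, hence
`exp (r A) = e^{-c r} exp (r (A + c I))` has nonnegative entries for `r ≥ 0` once `c` is large.
Therefore `G s = exp ((t - s) A) v s` has derivative `exp ((t - s) A) (v' s - A v s) ≤ 0`, and
`v t = G t ≤ G 0 = exp (t A) λ`.
-/

open Matrix Set NormedSpace

namespace Matrix

def IsMetzler {n : Type*} (A : Matrix n n ℝ) : Prop := ∀ i j, i ≠ j → 0 ≤ A i j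

theorem IsMetzler.smul {n : Type*} {A : Matrix n n ℝ} (hA : A.IsMetzler) {t : ℝ} (ht : 0 ≤ t) :
    (t • A).IsMetzler := fun i j hij => mul_nonneg ht (hA i j hij)

variable {n : Type*} [Fintype n]

open scoped Matrix.Norms.Operator in
theorem _root_.HasDerivWithinAt.matrix_mulVec {m : Type*} [Fintype m] {f : ℝ → Matrix m n ℝ}
    {f' : Matrix m n ℝ} {g : ℝ → n → ℝ} {g' : n → ℝ} {s : Set ℝ} {x : ℝ}
    (hf : HasDerivWithinAt f f' s x) (hg : HasDerivWithinAt g g' s x) :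
    HasDerivWithinAt (fun y => f y *ᵥ g y) (f x *ᵥ g' + f' *ᵥ g x) s x :=
  (mulVecBilin ℝ ℝ : Matrix m n ℝ →ₗ[ℝ] (n → ℝ) →ₗ[ℝ] m → ℝ).toContinuousBilinearMap
    |>.hasDerivWithinAt_of_bilinear hf hg

variable [DecidableEq n]

theorem exp_apply_nonneg_of_nonneg {A : Matrix n n ℝ} (hA : ∀ i j, 0 ≤ A i j) (i j : n) :
    0 ≤ exp A i j := by
  rw [exp_eq_tsum_rat]
  exact tsum_nonneg (α := n → n → ℝ) (g := fun k : ℕ => ((k.factorial : ℚ)⁻¹ • A ^ k))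
    (fun k i j => smul_nonneg (by positivity : (0 : ℚ) ≤ (k.factorial : ℚ)⁻¹)
      (pow_apply_nonneg hA k i j)) i j

theorem IsMetzler.exp_apply_nonneg {A : Matrix n n ℝ} (hA : A.IsMetzler) (i j : n) :
    0 ≤ exp A i j := by
  set c := ∑ k, |A k k|
  have hshift : ∀ i j, 0 ≤ (A + algebraMap ℝ _ c) i j := by
    intro i j
    rw [add_apply, algebraMap_matrix_apply]
    split_ifs with h
    · subst h
      have := Finset.single_le_sum (f := fun k => |A k k|) (fun k _ => abs_nonneg _)
        (Finset.mem_univ i)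
      simp only [Algebra.algebraMap_self, RingHom.id_apply]
      linarith [neg_abs_le (A i i)]
    · simpa using hA i j h
  have hscalar : exp (algebraMap ℝ (Matrix n n ℝ) (-c)) = algebraMap ℝ _ (Real.exp (-c)) := by
    open scoped Matrix.Norms.Operator in rw [Real.exp_eq_exp_ℝ, algebraMap_exp_comm]; rfl
  have hsplit : exp A = exp (A + algebraMap ℝ _ c) * algebraMap ℝ _ (Real.exp (-c)) := by
    rw [← hscalar, ← exp_add_of_commute _ _ (Algebra.commute_algebraMap_right _ _), map_neg,
      add_neg_cancel_right]
  rw [hsplit, ← Algebra.commutes, ← Algebra.smul_def, smul_apply, smul_eq_mul]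
  exact mul_nonneg (Real.exp_pos _).le (exp_apply_nonneg_of_nonneg hshift i j)

open scoped Matrix.Norms.Operator in
theorem IsMetzler.le_exp_smul_mulVec_of_deriv_le {A : Matrix n n ℝ} (hA : A.IsMetzler)
    {w w' : ℝ → n → ℝ} (hw : ∀ s, 0 ≤ s → HasDerivWithinAt w (w' s) (Ici 0) s)
    (hsub : ∀ s, 0 ≤ s → w' s ≤ A *ᵥ w s) {t : ℝ} (ht : 0 ≤ t) :
    w t ≤ exp (t • A) *ᵥ w 0 := by
  set G : ℝ → n → ℝ := fun s => exp ((t - s) • A) *ᵥ w s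
  have hG : ∀ s, 0 ≤ s →
      HasDerivWithinAt G (exp ((t - s) • A) *ᵥ (w' s - A *ᵥ w s)) (Ici 0) s := by
    intro s hs
    have hE := (hasDerivAt_exp_smul_const A (t - s)).scomp s ((hasDerivAt_id s).const_sub t)
    refine (hE.hasDerivWithinAt.matrix_mulVec (hw s hs)).congr_deriv ?_
    rw [neg_one_smul, neg_mulVec, ← mulVec_mulVec, mulVec_sub]
    exact (sub_eq_add_neg _ _).symm
  have hG_anti : ∀ i, AntitoneOn (fun s => G s i) (Icc 0 t) := by
    intro i
    refine antitoneOn_of_hasDerivWithinAt_nonpos (convex_Icc 0 t)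
      (f' := fun s => (exp ((t - s) • A) *ᵥ (w' s - A *ᵥ w s)) i)
      (fun s hs => (hasDerivWithinAt_pi.1 (hG s hs.1) i).continuousWithinAt.mono
        Icc_subset_Ici_self) (fun s hs => ?_) (fun s hs => ?_) <;> rw [interior_Icc] at hs
    · rw [interior_Icc]
      exact (hasDerivWithinAt_pi.1 (hG s hs.1.le) i).mono
        (Ioo_subset_Ioi_self.trans Ioi_subset_Ici_self)
    · exact Finset.sum_nonpos fun j _ => mul_nonpos_of_nonneg_of_nonpos
        ((hA.smul (sub_nonneg.2 hs.2.le)).exp_apply_nonneg i j) (sub_nonpos.2 (hsub s hs.1.le j))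
  intro i
  simpa [G] using hG_anti i ⟨le_rfl, ht⟩ ⟨ht, le_rfl⟩ ht

end Matrix

theorem riccati_le_linear_general
    (b₁₁ b₁₂ b₂₁ b₂₂ σ₁ σ₂ : ℝ)
    (h12 : 0 ≤ b₁₂) (h21 : 0 ≤ b₂₁)
    (lam : Fin 2 → ℝ)
    (v₁ v₂ : ℝ → ℝ)
    (hv0 : v₁ 0 = lam 0 ∧ v₂ 0 = lam 1)
    (hd1 : ∀ t : ℝ, 0 ≤ t → HasDerivWithinAt v₁
      (-b₁₁ * v₁ t + b₁₂ * v₂ t - σ₁ ^ 2 / 2 * (v₁ t) ^ 2) (Ici 0) t)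
    (hd2 : ∀ t : ℝ, 0 ≤ t → HasDerivWithinAt v₂
      (b₂₁ * v₁ t - b₂₂ * v₂ t - σ₂ ^ 2 / 2 * (v₂ t) ^ 2) (Ici 0) t) :
    ∀ t : ℝ, 0 ≤ t →
      v₁ t ≤ (NormedSpace.exp (-(t • !![b₁₁, -b₁₂; -b₂₁, b₂₂]))).mulVec lam 0 ∧
      v₂ t ≤ (NormedSpace.exp (-(t • !![b₁₁, -b₁₂; -b₂₁, b₂₂]))).mulVec lam 1 := by
  intro t ht
  set A : Matrix (Fin 2) (Fin 2) ℝ := -!![b₁₁, -b₁₂; -b₂₁, b₂₂]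
  set v' : ℝ → Fin 2 → ℝ := fun s =>
    ![-b₁₁ * v₁ s + b₁₂ * v₂ s - σ₁ ^ 2 / 2 * (v₁ s) ^ 2,
      b₂₁ * v₁ s - b₂₂ * v₂ s - σ₂ ^ 2 / 2 * (v₂ s) ^ 2]
  have hA : A.IsMetzler := by
    intro i j hij
    fin_cases i <;> fin_cases j <;> simp_all [A]
  have hv : ∀ s, 0 ≤ s → HasDerivWithinAt (fun s => ![v₁ s, v₂ s]) (v' s) (Ici 0) s := by
    intro s hs
    rw [hasDerivWithinAt_pi]
    intro i
    fin_cases i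
    exacts [hd1 s hs, hd2 s hs]
  have hsub : ∀ s, 0 ≤ s → v' s ≤ A *ᵥ ![v₁ s, v₂ s] := by
    intro s _ i
    fin_cases i <;>
      simp only [v', A, mulVec, dotProduct, Fin.sum_univ_two, neg_of, neg_cons, Matrix.neg_empty,
        of_apply, cons_val', cons_val_zero, cons_val_one, cons_val_fin_one, Fin.zero_eta, Fin.mk_one, neg_neg] <;>
      linarith [mul_nonneg (sq_nonneg σ₁) (sq_nonneg (v₁ s)),
        mul_nonneg (sq_nonneg σ₂) (sq_nonneg (v₂ s))]
  have hv0' : ![v₁ 0, v₂ 0] = lam := by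
    ext i
    fin_cases i
    exacts [hv0.1, hv0.2]
  have key := hA.le_exp_smul_mulVec_of_deriv_le hv hsub ht
  rw [hv0', smul_neg] at key
  exact ⟨key 0, key 1⟩

/-- Comparison of the Riccati-type system of a two-type CBI-process
with the associated linear system: the solution `v = (v₁, v₂)` of
`v₁' = -b₁₁v₁ + b₁₂v₂ - (σ₁²/2)v₁²`, `v₂' = b₂₁v₁ - b₂₂v₂ - (σ₂²/2)v₂²`
with `v(0) = λ ∈ [0,∞)²` is dominated componentwise by `u(t) = exp(-tB)·λ`. -/
theorem riccati_le_linear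
    (b₁₁ b₁₂ b₂₁ b₂₂ σ₁ σ₂ : ℝ)
    (h11 : 0 < b₁₁) (h22 : 0 < b₂₂) (h12 : 0 ≤ b₁₂) (h21 : 0 ≤ b₂₁)
    (hσ₁ : 0 < σ₁) (hσ₂ : 0 < σ₂)
    (lam : Fin 2 → ℝ) (hlam : 0 ≤ lam 0 ∧ 0 ≤ lam 1)
    (v₁ v₂ : ℝ → ℝ)
    (hv0 : v₁ 0 = lam 0 ∧ v₂ 0 = lam 1)
    (hnn : ∀ t : ℝ, 0 ≤ t → 0 ≤ v₁ t ∧ 0 ≤ v₂ t)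
    (hd1 : ∀ t : ℝ, 0 ≤ t → HasDerivWithinAt v₁
      (-b₁₁ * v₁ t + b₁₂ * v₂ t - σ₁ ^ 2 / 2 * (v₁ t) ^ 2) (Ici 0) t)
    (hd2 : ∀ t : ℝ, 0 ≤ t → HasDerivWithinAt v₂
      (b₂₁ * v₁ t - b₂₂ * v₂ t - σ₂ ^ 2 / 2 * (v₂ t) ^ 2) (Ici 0) t) :
    ∀ t : ℝ, 0 ≤ t →
      v₁ t ≤ (NormedSpace.exp (-(t • !![b₁₁, -b₁₂; -b₂₁, b₂₂]))).mulVec lam 0 ∧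
      v₂ t ≤ (NormedSpace.exp (-(t • !![b₁₁, -b₁₂; -b₂₁, b₂₂]))).mulVec lam 1 :=
  riccati_le_linear_general b₁₁ b₁₂ b₂₁ b₂₂ σ₁ σ₂ h12 h21 lam v₁ v₂ hv0 hd1 hd2
end

section
/- Let B = [[b₁₁, −b₁₂], [−b₂₁, b₂₂]] with b₁₁, b₂₂ > 0, b₁₂, b₂₁ ≥ 0 and b₁₂·b₂₁ < b₁₁·b₂₂, let σ₁, σ₂ > 0, a₁, a₂ > 0 and λ ∈ [0,∞)². Suppose v = (v₁, v₂) : [0,∞) → [0,∞)² is differentiable with v(0) = λ and satisfies v₁′(t) = −b₁₁v₁(t) + b₁₂v₂(t) − (σ₁²/2)v₁(t)² and v₂′(t) = b₂₁v₁(t) − b₂₂v₂(t) − (σ₂²/2)v₂(t)² for all t ≥ 0. Then v_i(t) → 0 as t → ∞ for i = 1, 2, and the integral ∫₀^∞ (a₁v₁(s) + a₂v₂(s)) ds is finite. -/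
/-!
The weights `c = (b₂₂ + b₂₁, b₁₁ + b₁₂) = (1, 1) · adj B` satisfy `cᵀ B = det B · (1, 1)`, so along
the flow the Lyapunov function `w = c₁ v₁ + c₂ v₂` obeys `w' ≤ -det B · (v₁ + v₂) ≤ -δ w` with
`δ = det B / (c₁ + c₂) > 0`: the quadratic terms only help since `v ≥ 0`. Grönwall's inequality
gives `w(t) ≤ w(0) e^{-δt}`, hence both `vᵢ` are `O(e^{-δt})`, which yields both the limit and the
integrability.
-/

open Set Filter Real Asymptotics

theorem le_mul_exp_of_hasDerivWithinAt_le_mul {f f' : ℝ → ℝ} {K a : ℝ}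
    (hf : ∀ t ∈ Ici a, HasDerivWithinAt f (f' t) (Ici a) t)
    (bound : ∀ t ∈ Ici a, f' t ≤ K * f t) {t : ℝ} (ht : a ≤ t) :
    f t ≤ f a * exp (K * (t - a)) := by
  have h := le_gronwallBound_of_liminf_deriv_right_le (f' := f') (ε := 0) (b := t)
    (fun s hs => ((hf s hs.1).continuousWithinAt).mono Icc_subset_Ici_self)
    (fun s hs _ hr => ((hf s hs.1).mono (Ici_subset_Ici.2 hs.1)).liminf_right_slope_le hr)
    le_rfl (fun s hs => by simpa using bound s hs.1) t ⟨ht, le_rfl⟩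
  rwa [gronwallBound_ε0] at h

theorem riccati_weighted_drift_le {b₁₁ b₁₂ b₂₁ b₂₂ x y : ℝ} (σ₁ σ₂ : ℝ)
    (h11 : 0 < b₁₁) (h22 : 0 < b₂₂) (h12 : 0 ≤ b₁₂) (h21 : 0 ≤ b₂₁)
    (hκ : b₁₂ * b₂₁ < b₁₁ * b₂₂) (hx : 0 ≤ x) (hy : 0 ≤ y) :
    (b₂₂ + b₂₁) * (-b₁₁ * x + b₁₂ * y - σ₁ ^ 2 / 2 * x ^ 2)
        + (b₁₁ + b₁₂) * (b₂₁ * x - b₂₂ * y - σ₂ ^ 2 / 2 * y ^ 2)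
      ≤ -((b₁₁ * b₂₂ - b₁₂ * b₂₁) / (b₁₁ + b₁₂ + b₂₁ + b₂₂))
          * ((b₂₂ + b₂₁) * x + (b₁₁ + b₁₂) * y) := by
  set d := b₁₁ * b₂₂ - b₁₂ * b₂₁
  set S := b₁₁ + b₁₂ + b₂₁ + b₂₂
  have hS : 0 < S := by positivity
  have hlin : (b₂₂ + b₂₁) * (-b₁₁ * x + b₁₂ * y) + (b₁₁ + b₁₂) * (b₂₁ * x - b₂₂ * y)
      = -d * (x + y) := by ring
  have hquad : 0 ≤ (b₂₂ + b₂₁) * (σ₁ ^ 2 / 2 * x ^ 2) + (b₁₁ + b₁₂) * (σ₂ ^ 2 / 2 * y ^ 2) := by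
    positivity
  have hw : (b₂₂ + b₂₁) * x + (b₁₁ + b₁₂) * y ≤ S * (x + y) := by nlinarith
  have hdw : d / S * ((b₂₂ + b₂₁) * x + (b₁₁ + b₁₂) * y) ≤ d * (x + y) := by
    calc d / S * ((b₂₂ + b₂₁) * x + (b₁₁ + b₁₂) * y) ≤ d / S * (S * (x + y)) :=
          mul_le_mul_of_nonneg_left hw (div_nonneg (by linarith) hS.le)
      _ = d * (x + y) := by field_simp
  linarith

theorem isBigO_of_nonneg_of_mul_le_mul {α : Type*} {l : Filter α} {f g : α → ℝ} {c C : ℝ}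
    (hc : 0 < c) (hC : 0 ≤ C) (hf : ∀ᶠ x in l, 0 ≤ f x) (h : ∀ᶠ x in l, c * f x ≤ C * g x) :
    f =O[l] g := by
  refine IsBigO.of_bound (C / c) ?_
  filter_upwards [hf, h] with x hfx hx
  rw [norm_of_nonneg hfx, norm_eq_abs, div_mul_eq_mul_div, le_div_iff₀ hc]
  nlinarith [le_abs_self (g x)]

theorem riccati_isBigO_exp_neg {b₁₁ b₁₂ b₂₁ b₂₂ σ₁ σ₂ : ℝ} {v₁ v₂ : ℝ → ℝ}
    (h11 : 0 < b₁₁) (h22 : 0 < b₂₂) (h12 : 0 ≤ b₁₂) (h21 : 0 ≤ b₂₁)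
    (hκ : b₁₂ * b₂₁ < b₁₁ * b₂₂)
    (hnn : ∀ t : ℝ, 0 ≤ t → 0 ≤ v₁ t ∧ 0 ≤ v₂ t)
    (hd1 : ∀ t : ℝ, 0 ≤ t → HasDerivWithinAt v₁
      (-b₁₁ * v₁ t + b₁₂ * v₂ t - σ₁ ^ 2 / 2 * (v₁ t) ^ 2) (Ici 0) t)
    (hd2 : ∀ t : ℝ, 0 ≤ t → HasDerivWithinAt v₂
      (b₂₁ * v₁ t - b₂₂ * v₂ t - σ₂ ^ 2 / 2 * (v₂ t) ^ 2) (Ici 0) t) :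
    ∃ δ, 0 < δ ∧ (v₁ =O[atTop] fun t => exp (-δ * t)) ∧ (v₂ =O[atTop] fun t => exp (-δ * t)) := by
  set c₁ := b₂₂ + b₂₁
  set c₂ := b₁₁ + b₁₂
  set δ := (b₁₁ * b₂₂ - b₁₂ * b₂₁) / (b₁₁ + b₁₂ + b₂₁ + b₂₂)
  have hc₁ : 0 < c₁ := by positivity
  have hc₂ : 0 < c₂ := by positivity
  have hδ : 0 < δ := div_pos (by linarith) (by positivity)
  have hw : ∀ t, 0 ≤ t → c₁ * v₁ t + c₂ * v₂ t ≤ (c₁ * v₁ 0 + c₂ * v₂ 0) * exp (-δ * t) := by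
    intro t ht
    simpa using le_mul_exp_of_hasDerivWithinAt_le_mul
      (fun s hs => ((hd1 s hs).const_mul c₁).add ((hd2 s hs).const_mul c₂))
      (fun s hs => riccati_weighted_drift_le σ₁ σ₂ h11 h22 h12 h21 hκ (hnn s hs).1 (hnn s hs).2)
      ht
  have hw₀ : 0 ≤ c₁ * v₁ 0 + c₂ * v₂ 0 := by
    obtain ⟨h₁, h₂⟩ := hnn 0 le_rfl
    positivity
  have hv : ∀ᶠ t in atTop, 0 ≤ v₁ t ∧ 0 ≤ v₂ t := eventually_atTop.2 ⟨0, hnn⟩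
  refine ⟨δ, hδ, isBigO_of_nonneg_of_mul_le_mul hc₁ hw₀ (hv.mono fun t h => h.1) ?_,
    isBigO_of_nonneg_of_mul_le_mul hc₂ hw₀ (hv.mono fun t h => h.2) ?_⟩ <;>
  filter_upwards [eventually_ge_atTop 0] with t ht <;>
  linarith [hw t ht, mul_nonneg hc₁.le (hnn t ht).1, mul_nonneg hc₂.le (hnn t ht).2]

theorem riccati_tendsto_zero_and_integrable_general
    (b₁₁ b₁₂ b₂₁ b₂₂ σ₁ σ₂ a₁ a₂ : ℝ)
    (h11 : 0 < b₁₁) (h22 : 0 < b₂₂) (h12 : 0 ≤ b₁₂) (h21 : 0 ≤ b₂₁)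
    (hκ : b₁₂ * b₂₁ < b₁₁ * b₂₂)
    (v₁ v₂ : ℝ → ℝ)
    (hnn : ∀ t : ℝ, 0 ≤ t → 0 ≤ v₁ t ∧ 0 ≤ v₂ t)
    (hd1 : ∀ t : ℝ, 0 ≤ t → HasDerivWithinAt v₁
      (-b₁₁ * v₁ t + b₁₂ * v₂ t - σ₁ ^ 2 / 2 * (v₁ t) ^ 2) (Ici 0) t)
    (hd2 : ∀ t : ℝ, 0 ≤ t → HasDerivWithinAt v₂
      (b₂₁ * v₁ t - b₂₂ * v₂ t - σ₂ ^ 2 / 2 * (v₂ t) ^ 2) (Ici 0) t) :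
    Tendsto v₁ atTop (nhds 0) ∧ Tendsto v₂ atTop (nhds 0) ∧
      MeasureTheory.IntegrableOn (fun s => a₁ * v₁ s + a₂ * v₂ s) (Ici 0) := by
  obtain ⟨δ, hδ, hO₁, hO₂⟩ := riccati_isBigO_exp_neg h11 h22 h12 h21 hκ hnn hd1 hd2
  have hexp : Tendsto (fun t => exp (-δ * t)) atTop (nhds 0) :=
    tendsto_exp_atBot.comp (tendsto_id.const_mul_atTop_of_neg (neg_neg_iff_pos.2 hδ))
  have hcont : ContinuousOn (fun s => a₁ * v₁ s + a₂ * v₂ s) (Ici 0) :=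
    (continuousOn_const.mul fun t ht => (hd1 t ht).continuousWithinAt).add
      (continuousOn_const.mul fun t ht => (hd2 t ht).continuousWithinAt)
  refine ⟨hO₁.trans_tendsto hexp, hO₂.trans_tendsto hexp, ?_⟩
  rw [integrableOn_Ici_iff_integrableOn_Ioi]
  exact integrable_of_isBigO_exp_neg hδ hcont ((hO₁.const_mul_left a₁).add (hO₂.const_mul_left a₂))

/-- If moreover `b₁₂b₂₁ < b₁₁b₂₂` (both eigenvalues of `B`
positive) and `a₁, a₂ > 0`, then the solution `v = (v₁, v₂)` of the
Riccati-type system tends to `0` at infinity and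
`∫₀^∞ (a₁v₁(s) + a₂v₂(s)) ds < ∞`. -/
theorem riccati_tendsto_zero_and_integrable
    (b₁₁ b₁₂ b₂₁ b₂₂ σ₁ σ₂ a₁ a₂ : ℝ)
    (h11 : 0 < b₁₁) (h22 : 0 < b₂₂) (h12 : 0 ≤ b₁₂) (h21 : 0 ≤ b₂₁)
    (hκ : b₁₂ * b₂₁ < b₁₁ * b₂₂)
    (hσ₁ : 0 < σ₁) (hσ₂ : 0 < σ₂) (ha₁ : 0 < a₁) (ha₂ : 0 < a₂)
    (lam : Fin 2 → ℝ) (hlam : 0 ≤ lam 0 ∧ 0 ≤ lam 1)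
    (v₁ v₂ : ℝ → ℝ)
    (hv0 : v₁ 0 = lam 0 ∧ v₂ 0 = lam 1)
    (hnn : ∀ t : ℝ, 0 ≤ t → 0 ≤ v₁ t ∧ 0 ≤ v₂ t)
    (hd1 : ∀ t : ℝ, 0 ≤ t → HasDerivWithinAt v₁
      (-b₁₁ * v₁ t + b₁₂ * v₂ t - σ₁ ^ 2 / 2 * (v₁ t) ^ 2) (Ici 0) t)
    (hd2 : ∀ t : ℝ, 0 ≤ t → HasDerivWithinAt v₂
      (b₂₁ * v₁ t - b₂₂ * v₂ t - σ₂ ^ 2 / 2 * (v₂ t) ^ 2) (Ici 0) t) :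
    Tendsto v₁ atTop (nhds 0) ∧ Tendsto v₂ atTop (nhds 0) ∧
      MeasureTheory.IntegrableOn (fun s => a₁ * v₁ s + a₂ * v₂ s) (Ici 0) :=
  riccati_tendsto_zero_and_integrable_general b₁₁ b₁₂ b₂₁ b₂₂ σ₁ σ₂ a₁ a₂ h11 h22 h12 h21 hκ v₁ v₂
    hnn hd1 hd2
end

section
/- Let (Ω, ℱ, P) be a probability space, X₀, X₁ : Ω → ℝ² random vectors and g : ℝ² → ℝ Borel measurable, such that g(X₀), g(X₀)X₀, g(X₀)X₁, g(X₀)X₀X₀ᵀ and g(X₀)X₁X₀ᵀ are all integrable. Suppose there exist ρ ∈ ℝ² and a real 2×2 matrix γ such that E[X₁ | σ(X₀)] = ρ + γX₀ almost surely. Then E[g(X₀)]·E[g(X₀)X₁X₀ᵀ] − E[g(X₀)X₁]·E[g(X₀)X₀ᵀ] = γ·(E[g(X₀)]·E[g(X₀)X₀X₀ᵀ] − E[g(X₀)X₀]·E[g(X₀)X₀ᵀ]). -/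
open MeasureTheory Matrix

/-!
Pulling the σ(X₀)-measurable factors `g(X₀)` and `g(X₀) X₀ⱼ` out of `E[· | σ(X₀)]` turns the
affine regression into the moment identities `E[g X₁] = E[g] ρ + γ E[g X₀]` and
`E[g X₁ X₀ᵀ] = ρ E[g X₀]ᵀ + γ E[g X₀ X₀ᵀ]`; in the combination of the theorem the `ρ`-terms cancel.
-/

section Algebra

variable {R : Type*} [CommRing R] {m n : Type*} [Fintype n]

theorem Matrix.smul_sub_vecMulVec_of_eq_affine {G : R} {ρ N : m → R} {M : n → R}
    {γ : Matrix m n R} {S : Matrix n n R} {T : Matrix m n R}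
    (hN : N = G • ρ + γ *ᵥ M) (hT : T = vecMulVec ρ M + γ * S) :
    G • T - vecMulVec N M = γ * (G • S - vecMulVec M M) := by
  subst hN hT
  rw [add_vecMulVec, smul_vecMulVec, ← mul_vecMulVec, Matrix.mul_sub, Matrix.mul_smul, smul_add]
  abel

end Algebra

namespace MeasureTheory

variable {Ω : Type*} {m m₀ : MeasurableSpace Ω} {μ : Measure[m₀] Ω}

theorem condExp_eval {ι : Type*} [Fintype ι] {Y : Ω → ι → ℝ} (hY : Integrable Y μ) (i : ι) :
    μ[(Y · i) | m] =ᵐ[μ] fun ω => μ[Y | m] ω i :=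
  ((ContinuousLinearMap.proj (R := ℝ) (φ := fun _ : ι => ℝ) i).comp_condExp_comm hY).symm

theorem integral_mul_eq_of_condExp_ae_eq (hm : m ≤ m₀) [SigmaFinite (μ.trim hm)]
    {Z Y F : Ω → ℝ} (hZ : StronglyMeasurable[m] Z) (hZY : Integrable (Z * Y) μ)
    (hY : Integrable Y μ) (hcond : μ[Y | m] =ᵐ[μ] F) :
    ∫ ω, Z ω * Y ω ∂μ = ∫ ω, Z ω * F ω ∂μ :=
  calc ∫ ω, Z ω * Y ω ∂μ = ∫ ω, μ[Z * Y | m] ω ∂μ := (integral_condExp hm).symm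
    _ = ∫ ω, Z ω * F ω ∂μ := integral_congr_ae <|
      (condExp_mul_of_stronglyMeasurable_left hZ hZY hY).trans <|
        hcond.mono fun ω hω => by simp only [Pi.mul_apply, hω]

theorem integral_mul_add_mulVec {ι κ : Type*} [Fintype ι] {Z : Ω → ℝ} {X : Ω → ι → ℝ}
    (ρ : κ → ℝ) (γ : Matrix κ ι ℝ) (hZ : Integrable Z μ)
    (hZX : ∀ k, Integrable (fun ω => Z ω * X ω k) μ) (i : κ) :
    ∫ ω, Z ω * (ρ + γ *ᵥ X ω) i ∂μ
      = ρ i * ∫ ω, Z ω ∂μ + ∑ k, γ i k * ∫ ω, Z ω * X ω k ∂μ := by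
  have hexpand : ∀ ω, Z ω * (ρ + γ *ᵥ X ω) i = ρ i * Z ω + ∑ k, γ i k * (Z ω * X ω k) := by
    intro ω
    simp only [Pi.add_apply, mulVec, dotProduct, mul_add, Finset.mul_sum]
    congr 1 <;> [ring; exact Finset.sum_congr rfl fun k _ => by ring]
  simp_rw [hexpand]
  rw [integral_add (hZ.const_mul _) (integrable_finsetSum _ fun k _ => (hZX k).const_mul _),
    integral_finsetSum _ fun k _ => (hZX k).const_mul _, integral_const_mul]
  simp_rw [integral_const_mul]

end MeasureTheory

theorem cov_identity_of_condExp_affine_general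
    {Ω : Type*} [MeasurableSpace Ω] (μ : Measure Ω) [IsProbabilityMeasure μ]
    (X₀ X₁ : Ω → Fin 2 → ℝ) (hX₀ : Measurable X₀)
    (g : (Fin 2 → ℝ) → ℝ) (hg : Measurable g)
    (hX₁int : Integrable X₁ μ)
    (hint0 : Integrable (fun ω => g (X₀ ω)) μ)
    (hint1 : Integrable (fun ω => g (X₀ ω) • X₀ ω) μ)
    (hint2 : Integrable (fun ω => g (X₀ ω) • X₁ ω) μ)
    (hint3 : ∀ i j : Fin 2, Integrable (fun ω => g (X₀ ω) * X₀ ω i * X₀ ω j) μ)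
    (hint4 : ∀ i j : Fin 2, Integrable (fun ω => g (X₀ ω) * X₁ ω i * X₀ ω j) μ)
    (ρ : Fin 2 → ℝ) (γ : Matrix (Fin 2) (Fin 2) ℝ)
    (hcond : μ[X₁ | MeasurableSpace.comap X₀ inferInstance]
      =ᵐ[μ] fun ω => ρ + γ.mulVec (X₀ ω)) :
    (∫ ω, g (X₀ ω) ∂μ) • (Matrix.of fun i j => ∫ ω, g (X₀ ω) * X₁ ω i * X₀ ω j ∂μ)
        - vecMulVec (∫ ω, g (X₀ ω) • X₁ ω ∂μ) (∫ ω, g (X₀ ω) • X₀ ω ∂μ)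
      = γ * ((∫ ω, g (X₀ ω) ∂μ) • (Matrix.of fun i j => ∫ ω, g (X₀ ω) * X₀ ω i * X₀ ω j ∂μ)
        - vecMulVec (∫ ω, g (X₀ ω) • X₀ ω ∂μ) (∫ ω, g (X₀ ω) • X₀ ω ∂μ)) := by
  have hm := hX₀.comap_le
  have hgX₀ : StronglyMeasurable[MeasurableSpace.comap X₀ inferInstance] fun ω => g (X₀ ω) :=
    (hg.comp (comap_measurable X₀)).stronglyMeasurable
  have hX₀m : ∀ j, StronglyMeasurable[MeasurableSpace.comap X₀ inferInstance] fun ω => X₀ ω j :=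
    fun j => ((measurable_pi_apply j).comp (comap_measurable X₀)).stronglyMeasurable
  have pull_out : ∀ Z : Ω → ℝ, StronglyMeasurable[MeasurableSpace.comap X₀ inferInstance] Z →
      ∀ i, Integrable (fun ω => Z ω * X₁ ω i) μ →
      ∫ ω, Z ω * X₁ ω i ∂μ = ∫ ω, Z ω * (ρ + γ *ᵥ X₀ ω) i ∂μ :=
    fun Z hZ i hZX₁ => integral_mul_eq_of_condExp_ae_eq hm hZ hZX₁ (hX₁int.eval i)
      ((condExp_eval hX₁int i).trans (hcond.mono fun ω hω => congrFun hω i))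
  have hM : ∀ k, (∫ ω, g (X₀ ω) • X₀ ω ∂μ) k = ∫ ω, g (X₀ ω) * X₀ ω k ∂μ :=
    eval_integral hint1.eval
  refine smul_sub_vecMulVec_of_eq_affine (ρ := ρ) ?first_moment ?second_moment
  case first_moment =>
    ext i
    rw [eval_integral hint2.eval]
    simp only [Pi.smul_apply, smul_eq_mul, Pi.add_apply, mulVec, dotProduct, hM]
    rw [pull_out _ hgX₀ i (hint2.eval i), integral_mul_add_mulVec ρ γ hint0 hint1.eval]
    ring
  case second_moment =>
    ext i j
    simp only [of_apply, Matrix.add_apply, vecMulVec_apply, Matrix.mul_apply, hM]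
    simp_rw [mul_right_comm (g _) (X₁ _ i)]
    rw [pull_out (fun ω => g (X₀ ω) * X₀ ω j) (hgX₀.mul (hX₀m j)) i
        ((hint4 i j).congr (.of_forall fun ω => mul_right_comm _ _ _)),
      integral_mul_add_mulVec (Z := fun ω => g (X₀ ω) * X₀ ω j) ρ γ (hint1.eval j)
        fun k => (hint3 k j).congr (.of_forall fun ω => mul_right_comm _ _ _)]
    simp_rw [mul_right_comm _ (X₀ _ j)]

/-- If `E[X₁ | σ(X₀)] = ρ + γX₀` a.s., then
`E[g(X₀)]·E[g(X₀)X₁X₀ᵀ] − E[g(X₀)X₁]·E[g(X₀)X₀ᵀ]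
  = γ·(E[g(X₀)]·E[g(X₀)X₀X₀ᵀ] − E[g(X₀)X₀]·E[g(X₀)X₀ᵀ])`. -/
theorem cov_identity_of_condExp_affine
    {Ω : Type*} [MeasurableSpace Ω] (μ : Measure Ω) [IsProbabilityMeasure μ]
    (X₀ X₁ : Ω → Fin 2 → ℝ) (hX₀ : Measurable X₀) (hX₁ : Measurable X₁)
    (g : (Fin 2 → ℝ) → ℝ) (hg : Measurable g)
    (hX₁int : Integrable X₁ μ)
    (hint0 : Integrable (fun ω => g (X₀ ω)) μ)
    (hint1 : Integrable (fun ω => g (X₀ ω) • X₀ ω) μ)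
    (hint2 : Integrable (fun ω => g (X₀ ω) • X₁ ω) μ)
    (hint3 : ∀ i j : Fin 2, Integrable (fun ω => g (X₀ ω) * X₀ ω i * X₀ ω j) μ)
    (hint4 : ∀ i j : Fin 2, Integrable (fun ω => g (X₀ ω) * X₁ ω i * X₀ ω j) μ)
    (ρ : Fin 2 → ℝ) (γ : Matrix (Fin 2) (Fin 2) ℝ)
    (hcond : μ[X₁ | MeasurableSpace.comap X₀ inferInstance]
      =ᵐ[μ] fun ω => ρ + γ.mulVec (X₀ ω)) :
    (∫ ω, g (X₀ ω) ∂μ) • (Matrix.of fun i j => ∫ ω, g (X₀ ω) * X₁ ω i * X₀ ω j ∂μ)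
        - vecMulVec (∫ ω, g (X₀ ω) • X₁ ω ∂μ) (∫ ω, g (X₀ ω) • X₀ ω ∂μ)
      = γ * ((∫ ω, g (X₀ ω) ∂μ) • (Matrix.of fun i j => ∫ ω, g (X₀ ω) * X₀ ω i * X₀ ω j ∂μ)
        - vecMulVec (∫ ω, g (X₀ ω) • X₀ ω ∂μ) (∫ ω, g (X₀ ω) • X₀ ω ∂μ)) :=
  cov_identity_of_condExp_affine_general μ X₀ X₁ hX₀ g hg hX₁int hint0 hint1 hint2 hint3 hint4 ρ γ
    hcond
end

section
/- Let B be a real 2×2 matrix and A, x ∈ ℝ², and define f(t) = exp(−tB)·x + ∫₀ᵗ exp(−(t−s)B)·A ds. Then for all t ≥ 0, f(t)·f(t)ᵀ = exp(−tB)·x·xᵀ·exp(−tBᵀ) + ∫₀ᵗ exp(−(t−s)B)·(f(s)·Aᵀ + A·f(s)ᵀ)·exp(−(t−s)Bᵀ) ds. -/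
/-!
Conjugating by `exp(-(t - s)B)` turns `f(s)` into
`g(s) = exp(-tB)x + ∫₀ˢ exp(-(t - u)B)A du`, whose derivative is `exp(-(t - s)B)A`.
The integrand is then the derivative of `g(s)g(s)ᵀ`, so the identity is the fundamental
theorem of calculus between `g(0) = exp(-tB)x` and `g(t) = f(t)`.
-/

open Matrix intervalIntegral

noncomputable section

/-- `f(t) = exp(-tB)·x + ∫₀ᵗ exp(-(t-s)B)·A ds`, the conditional mean of the
two-type CBI-process with drift `dX_t = (A - BX_t)dt`. -/
def condMean (B : Matrix (Fin 2) (Fin 2) ℝ) (A x : Fin 2 → ℝ) (t : ℝ) : Fin 2 → ℝ :=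
  (NormedSpace.exp (-(t • B))).mulVec x
    + ∫ s in (0:ℝ)..t, (NormedSpace.exp (-((t - s) • B))).mulVec A

open NormedSpace MeasureTheory

namespace Matrix

theorem mul_vecMulVec_mul_transpose {m n R : Type*} [Fintype n] [CommSemiring R]
    (M : Matrix m n R) (u v : n → R) :
    M * vecMulVec u v * Mᵀ = vecMulVec (M *ᵥ u) (M *ᵥ v) := by
  rw [mul_vecMulVec, vecMulVec_mul, vecMul_transpose]

theorem mulVec_intervalIntegral {m n : Type*} [Fintype m] [Fintype n] (M : Matrix m n ℝ)
    {g : ℝ → n → ℝ} {a b : ℝ} (hg : IntervalIntegrable g volume a b) :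
    M *ᵥ ∫ s in a..b, g s = ∫ s in a..b, M *ᵥ g s :=
  ((mulVecLin M).toContinuousLinearMap.intervalIntegral_comp_comm hg).symm

section Exp

variable {n : Type*} [Fintype n] [DecidableEq n] (B : Matrix n n ℝ)

theorem continuous_exp_neg_smul : Continuous fun s : ℝ => exp (-(s • B)) := by
  -- matrices carry no global norm; the l∞ operator norm induces their usual topology
  let _ : NormedRing (Matrix n n ℝ) := Matrix.linftyOpNormedRing
  let _ : NormedAlgebra ℝ (Matrix n n ℝ) := Matrix.linftyOpNormedAlgebra
  let _ : NormedAlgebra ℚ (Matrix n n ℝ) := NormedAlgebra.restrictScalars ℚ ℝ _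
  exact exp_continuous.comp (by fun_prop)

theorem continuous_exp_neg_sub_smul_mulVec (t : ℝ) (v : n → ℝ) :
    Continuous fun s : ℝ => exp (-((t - s) • B)) *ᵥ v :=
  ((continuous_exp_neg_smul B).comp (continuous_sub_left t)).matrix_mulVec continuous_const

theorem exp_neg_smul_mul_exp_neg_smul (a b : ℝ) :
    exp (-(a • B)) * exp (-(b • B)) = exp (-((a + b) • B)) := by
  have hcomm : Commute (-(a • B)) (-(b • B)) :=
    (((Commute.refl B).smul_left a).smul_right b).neg_left.neg_right
  rw [← exp_add_of_commute _ _ hcomm, ← neg_add, add_smul]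

theorem exp_neg_smul_transpose (s : ℝ) : exp (-(s • Bᵀ)) = (exp (-(s • B)))ᵀ := by
  rw [← transpose_smul, ← transpose_neg, exp_transpose]

end Exp

end Matrix

section CondMean

variable (B : Matrix (Fin 2) (Fin 2) ℝ) (A x : Fin 2 → ℝ)

theorem exp_mulVec_condMean (t s : ℝ) :
    exp (-((t - s) • B)) *ᵥ condMean B A x s
      = exp (-(t • B)) *ᵥ x + ∫ u in (0:ℝ)..s, exp (-((t - u) • B)) *ᵥ A := by
  rw [condMean, mulVec_add, mulVec_mulVec, exp_neg_smul_mul_exp_neg_smul,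
    mulVec_intervalIntegral _ ((continuous_exp_neg_sub_smul_mulVec B s A).intervalIntegrable _ _),
    sub_add_cancel]
  congr 1
  refine integral_congr fun u _ => ?_
  rw [mulVec_mulVec, exp_neg_smul_mul_exp_neg_smul, sub_add_sub_cancel]

theorem hasDerivAt_exp_mulVec_condMean (t s : ℝ) :
    HasDerivAt (fun u => exp (-((t - u) • B)) *ᵥ condMean B A x u)
      (exp (-((t - s) • B)) *ᵥ A) s := by
  simp only [exp_mulVec_condMean]
  exact ((continuous_exp_neg_sub_smul_mulVec B t A).integral_hasStrictDerivAt 0 s).hasDerivAt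
    |>.const_add _

end CondMean

theorem condMean_outer_eq_general (B : Matrix (Fin 2) (Fin 2) ℝ) (A x : Fin 2 → ℝ)
    (t : ℝ) (i j : Fin 2) :
    vecMulVec (condMean B A x t) (condMean B A x t) i j
      = (NormedSpace.exp (-(t • B)) * vecMulVec x x
          * NormedSpace.exp (-(t • Bᵀ))) i j
        + ∫ s in (0:ℝ)..t,
            (NormedSpace.exp (-((t - s) • B))
              * (vecMulVec (condMean B A x s) A + vecMulVec A (condMean B A x s))
              * NormedSpace.exp (-((t - s) • Bᵀ))) i j := by
  set g := fun s => exp (-((t - s) • B)) *ᵥ condMean B A x s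
  set h := fun s => exp (-((t - s) • B)) *ᵥ A
  have hg (k : Fin 2) (s : ℝ) : HasDerivAt (fun s => g s k) (h s k) s :=
    hasDerivAt_pi.1 (hasDerivAt_exp_mulVec_condMean B A x t s) k
  have hh (k : Fin 2) : Continuous fun s => h s k :=
    (continuous_apply k).comp (continuous_exp_neg_sub_smul_mulVec B t A)
  have g_zero : g 0 = exp (-(t • B)) *ᵥ x := by
    simp only [g]
    rw [exp_mulVec_condMean, integral_same, add_zero]
  have g_self : g t = condMean B A x t := by
    simp only [g]
    rw [sub_self, zero_smul, neg_zero, exp_zero, one_mulVec]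
  have integrand (s : ℝ) :
      (exp (-((t - s) • B)) * (vecMulVec (condMean B A x s) A + vecMulVec A (condMean B A x s))
        * exp (-((t - s) • Bᵀ))) i j = h s i * g s j + g s i * h s j := by
    rw [exp_neg_smul_transpose, mul_add, add_mul, Matrix.add_apply, mul_vecMulVec_mul_transpose,
      mul_vecMulVec_mul_transpose, vecMulVec_apply, vecMulVec_apply, add_comm]
  rw [integral_congr fun s _ => integrand s,
    integral_deriv_mul_eq_sub (fun s _ => hg i s) (fun s _ => hg j s)
      ((hh i).intervalIntegrable _ _) ((hh j).intervalIntegrable _ _),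
    exp_neg_smul_transpose, mul_vecMulVec_mul_transpose, ← g_zero, g_self]
  simp only [vecMulVec_apply]
  ring

/-- the outer product `f(t)f(t)ᵀ` satisfies (entrywise)
`f(t)f(t)ᵀ = exp(-tB)xxᵀexp(-tBᵀ)
  + ∫₀ᵗ exp(-(t-s)B)(f(s)Aᵀ + Af(s)ᵀ)exp(-(t-s)Bᵀ) ds`. -/
theorem condMean_outer_eq (B : Matrix (Fin 2) (Fin 2) ℝ) (A x : Fin 2 → ℝ)
    (t : ℝ) (ht : 0 ≤ t) (i j : Fin 2) :
    vecMulVec (condMean B A x t) (condMean B A x t) i j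
      = (NormedSpace.exp (-(t • B)) * vecMulVec x x
          * NormedSpace.exp (-(t • Bᵀ))) i j
        + ∫ s in (0:ℝ)..t,
            (NormedSpace.exp (-((t - s) • B))
              * (vecMulVec (condMean B A x s) A + vecMulVec A (condMean B A x s))
              * NormedSpace.exp (-((t - s) • Bᵀ))) i j :=
  condMean_outer_eq_general B A x t i j

end
end
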